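/- Let G be a finite simple undirected graph on n vertices in which every vertex has degree at least 1, with random-walk matrix P, let s ∈ [0,1]^n, and let ℓ, u be reals with 0 < ℓ ≤ u ≤ 1. For α ∈ [ℓ,u]^n write A = diag(α) and f(s,α) = 1ᵀ (I − (I−A)P)⁻¹ A s (the total sum of equilibrium opinions). Then there exists a vector α* ∈ [ℓ,u]^n with α*_i ∈ {ℓ, u} for every i such that f(s,α*) ≤ f(s,α) for every α ∈ [ℓ,u]^n; that is, the opinion minimization problem always has an optimal solution in which every resistance parameter takes one of the two extreme values ℓ or u. -/

import Mathlib

open Matrix BigOperators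

/-- The random-walk matrix of a graph: `P i j = 1 / deg i` if `(i,j)` is an edge, else `0`. -/
noncomputable def rwMatrix {n : ℕ} (G : SimpleGraph (Fin n)) [DecidableRel G.Adj] :
    Matrix (Fin n) (Fin n) ℝ :=
  fun i j => if G.Adj i j then (1 : ℝ) / (G.degree i) else 0

/-- The total sum of equilibrium opinions `f(s,α) = 1ᵀ (I − (I−A)P)⁻¹ A s`,
where `A = diag α`. -/
noncomputable def totalOpinion {n : ℕ} (G : SimpleGraph (Fin n)) [DecidableRel G.Adj]
    (s α : Fin n → ℝ) : ℝ :=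
  ∑ i, (((1 - (1 - Matrix.diagonal α) * rwMatrix G)⁻¹ *ᵥ (Matrix.diagonal α *ᵥ s)) i)

/-!
Fix all resistances but `α i = t`. Only row `i` of `I - (I - A) P` and entry `i` of `A s` depend
on `t`, both affinely, so by Cramer's rule `f` is a linear-fractional function
`(a + b t) / (c + d t)` of `t`, whose denominator `det (I - (I - A) P)` has no zero on `[ℓ, u]`
because the matrix is strictly diagonally dominant. Without a pole, a linear-fractional function
is monotone on the interval, so moving `α i` to `ℓ` or to `u` does not increase `f`. Doing this
coordinate by coordinate dominates every `α` by a vertex of the box, and a minimizer over the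
finitely many vertices does the job.
-/

open Set Function

theorem mul_pos_of_affine_ne_zero_on_Icc {c d ℓ u x y : ℝ} (hD : ∀ t ∈ Icc ℓ u, c + d * t ≠ 0)
    (hx : x ∈ Icc ℓ u) (hy : y ∈ Icc ℓ u) : 0 < (c + d * x) * (c + d * y) := by
  rcases lt_trichotomy ((c + d * x) * (c + d * y)) 0 with hneg | hzero | hpos
  · have h0 : (0 : ℝ) ∈ uIcc (c + d * x) (c + d * y) := by
      rcases mul_neg_iff.mp hneg with ⟨h1, h2⟩ | ⟨h1, h2⟩
      · exact mem_uIcc.mpr (Or.inr ⟨h2.le, h1.le⟩)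
      · exact mem_uIcc.mpr (Or.inl ⟨h1.le, h2.le⟩)
    obtain ⟨z, hz, hz0⟩ := intermediate_value_uIcc (f := fun t => c + d * t) (by fun_prop) h0
    exact absurd hz0 (hD z (uIcc_subset_Icc hx hy hz))
  · rcases mul_eq_zero.mp hzero with h | h
    exacts [absurd h (hD x hx), absurd h (hD y hy)]
  · exact hpos

theorem exists_endpoint_div_le {a b c d ℓ u t : ℝ} (hD : ∀ x ∈ Icc ℓ u, c + d * x ≠ 0)
    (ht : t ∈ Icc ℓ u) :
    ∃ e, (e = ℓ ∨ e = u) ∧ (a + b * e) / (c + d * e) ≤ (a + b * t) / (c + d * t) := by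
  have hℓu : ℓ ≤ u := ht.1.trans ht.2
  have key : ∀ e ∈ Icc ℓ u, (a + b * t) / (c + d * t) - (a + b * e) / (c + d * e)
      = (b * c - a * d) * (t - e) / ((c + d * t) * (c + d * e)) := fun e he => by
    rw [div_sub_div _ _ (hD t ht) (hD e he)]
    ring
  rcases le_or_gt 0 (b * c - a * d) with hK | hK
  · refine ⟨ℓ, .inl rfl, sub_nonneg.mp ?_⟩
    rw [key ℓ ⟨le_rfl, hℓu⟩]
    exact div_nonneg (mul_nonneg hK (by linarith [ht.1]))
      (mul_pos_of_affine_ne_zero_on_Icc hD ht ⟨le_rfl, hℓu⟩).le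
  · refine ⟨u, .inr rfl, sub_nonneg.mp ?_⟩
    rw [key u ⟨hℓu, le_rfl⟩]
    exact div_nonneg (mul_nonneg_of_nonpos_of_nonpos hK.le (by linarith [ht.2]))
      (mul_pos_of_affine_ne_zero_on_Icc hD ht ⟨hℓu, le_rfl⟩).le

theorem Matrix.sum_inv_mulVec {K ι : Type*} [Field K] [Fintype ι] [DecidableEq ι]
    (M : Matrix ι ι K) (b : ι → K) :
    ∑ k, (M⁻¹ *ᵥ b) k = (∑ k, b k * (M.updateRow k 1).det) / M.det := by
  have hcol : ∀ k, ∑ l, M.adjugate l k = (M.updateRow k 1).det := fun k => by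
    have := congrFun (cramer_eq_adjugate_mulVec Mᵀ 1) k
    rw [cramer_apply, updateCol_transpose, det_transpose, ← adjugate_transpose] at this
    simpa [mulVec, dotProduct] using this.symm
  rw [inv_def, Ring.inverse_eq_inv', smul_mulVec, div_eq_inv_mul]
  simp only [Pi.smul_apply, smul_eq_mul, ← Finset.mul_sum]
  congr 1
  simp only [mulVec, dotProduct, ← hcol, Finset.mul_sum]
  rw [Finset.sum_comm]
  exact Finset.sum_congr rfl fun _ _ => Finset.sum_congr rfl fun _ _ => mul_comm _ _

section
variable {ι : Type*} [Fintype ι] [DecidableEq ι]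

theorem exists_vertex_minimizer (F : (ι → ℝ) → ℝ) {ℓ u : ℝ} (hℓu : ℓ ≤ u)
    (hF : ∀ α : ι → ℝ, (∀ j, α j ∈ Icc ℓ u) → ∀ i,
      ∃ e, (e = ℓ ∨ e = u) ∧ F (update α i e) ≤ F α) :
    ∃ αstar : ι → ℝ, (∀ i, αstar i = ℓ ∨ αstar i = u) ∧
      ∀ α : ι → ℝ, (∀ i, α i ∈ Icc ℓ u) → F αstar ≤ F α := by
  have descend : ∀ (T : Finset ι) (α : ι → ℝ), (∀ j, α j ∈ Icc ℓ u) →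
      ∃ β : ι → ℝ, (∀ j, β j ∈ Icc ℓ u) ∧ (∀ j ∈ T, β j = ℓ ∨ β j = u) ∧
        F β ≤ F α := by
    intro T
    induction T using Finset.induction_on with
    | empty => exact fun α hα => ⟨α, hα, by simp, le_rfl⟩
    | insert i T _ ih =>
      intro α hα
      obtain ⟨β, hβ, hβT, hβα⟩ := ih α hα
      obtain ⟨e, he, heβ⟩ := hF β hβ i
      have he' : e ∈ Icc ℓ u := by rcases he with rfl | rfl <;> simp [hℓu]
      refine ⟨update β i e,
        (forall_update_iff β fun _ y => y ∈ Icc ℓ u).2 ⟨he', fun j _ => hβ j⟩,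
        (forall_update_iff β fun j y => j ∈ insert i T → y = ℓ ∨ y = u).2
          ⟨fun _ => he, fun j hji hj => hβT j ((Finset.mem_insert.mp hj).resolve_left hji)⟩,
        heβ.trans hβα⟩
  have hfin : {α : ι → ℝ | ∀ i, α i ∈ ({ℓ, u} : Set ℝ)}.Finite :=
    Set.Finite.pi' fun _ => toFinite _
  obtain ⟨αstar, hαstar, hmin⟩ :=
    Set.exists_min_image _ F hfin ⟨fun _ => ℓ, fun _ => mem_insert _ _⟩
  refine ⟨αstar, hαstar, fun α hα => ?_⟩
  obtain ⟨β, -, hβ, hβα⟩ := descend Finset.univ α hα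
  exact (hmin β fun j => hβ j (Finset.mem_univ j)).trans hβα

variable {R : Type*} [CommRing R]

theorem one_sub_diagonal_mul_apply (P : Matrix ι ι R) (α : ι → R) (k j : ι) :
    (1 - (1 - diagonal α) * P) k j = (1 : Matrix ι ι R) k j - (1 - α k) * P k j := by
  rw [Matrix.sub_apply, sub_mul, one_mul, Matrix.sub_apply, diagonal_mul]
  ring

theorem one_sub_diagonal_update_mul (P : Matrix ι ι R) (α : ι → R) (i : ι) (t : R) :
    1 - (1 - diagonal (update α i t)) * P
      = (1 - (1 - diagonal α) * P).updateRow i ((1 : Matrix ι ι R) i - P i + t • P i) := by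
  ext k j
  rcases eq_or_ne k i with rfl | hki
  · rw [updateRow_self, one_sub_diagonal_mul_apply, update_self]
    simp only [Pi.add_apply, Pi.sub_apply, Pi.smul_apply, smul_eq_mul]
    ring
  · rw [updateRow_ne hki, one_sub_diagonal_mul_apply, one_sub_diagonal_mul_apply,
      update_of_ne hki]

theorem det_one_sub_diagonal_mul_ne_zero {P : Matrix ι ι ℝ} (hP : ∀ i j, 0 ≤ P i j)
    (hP1 : ∀ i, ∑ j, P i j ≤ 1) {α : ι → ℝ} (hα : ∀ i, α i ∈ Ioc 0 1) :
    (1 - (1 - diagonal α) * P).det ≠ 0 := by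
  refine det_ne_zero_of_sum_row_lt_diag fun k => ?_
  have hαk := hα k
  have hPkk : P k k ≤ 1 :=
    (Finset.single_le_sum (fun j _ => hP k j) (Finset.mem_univ k)).trans (hP1 k)
  have hoff : ∑ j ∈ Finset.univ.erase k, P k j ≤ 1 - P k k := by
    linarith [Finset.add_sum_erase Finset.univ (P k) (Finset.mem_univ k), hP1 k]
  calc ∑ j ∈ Finset.univ.erase k, ‖(1 - (1 - diagonal α) * P) k j‖
      = (1 - α k) * ∑ j ∈ Finset.univ.erase k, P k j := by
        rw [Finset.mul_sum]
        refine Finset.sum_congr rfl fun j hj => ?_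
        rw [one_sub_diagonal_mul_apply, one_apply_ne (Finset.ne_of_mem_erase hj).symm, zero_sub,
          norm_neg, Real.norm_eq_abs, abs_of_nonneg (mul_nonneg (by linarith [hαk.2]) (hP k j))]
    _ < 1 - (1 - α k) * P k k := by nlinarith [hαk.1, hαk.2, hP k k]
    _ = ‖(1 - (1 - diagonal α) * P) k k‖ := by
        rw [one_sub_diagonal_mul_apply, one_apply_eq, Real.norm_eq_abs, abs_of_nonneg]
        nlinarith [hαk.1, hαk.2, hP k k]

theorem exists_linearFractional_update (P : Matrix ι ι ℝ) (s α : ι → ℝ) (i : ι) :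
    ∃ a b c d : ℝ, ∀ t, (1 - (1 - diagonal (update α i t)) * P).det = c + d * t ∧
      ∑ k, ((1 - (1 - diagonal (update α i t)) * P)⁻¹ *ᵥ (diagonal (update α i t) *ᵥ s)) k =
        (a + b * t) / (c + d * t) := by
  set C := 1 - (1 - diagonal α) * P
  set r := (1 : Matrix ι ι ℝ) i - P i
  have hdet : ∀ (B : Matrix ι ι ℝ) t,
      (B.updateRow i (r + t • P i)).det = (B.updateRow i r).det + (B.updateRow i (P i)).det * t :=
    fun B t => by rw [det_updateRow_add, det_updateRow_smul]; ring
  have hterm : ∀ k, ∃ p q : ℝ, ∀ t, update α i t k * s k *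
      ((C.updateRow i (r + t • P i)).updateRow k 1).det = p + q * t := fun k => by
    rcases eq_or_ne k i with rfl | hki
    · exact ⟨0, s k * (C.updateRow k 1).det, fun t => by
        rw [update_self, updateRow_idem]; ring⟩
    · refine ⟨α k * s k * ((C.updateRow k 1).updateRow i r).det,
        α k * s k * ((C.updateRow k 1).updateRow i (P i)).det, fun t => ?_⟩
      rw [update_of_ne hki, updateRow_comm _ hki.symm, hdet]
      ring
  choose p q hpq using hterm
  refine ⟨∑ k, p k, ∑ k, q k, (C.updateRow i r).det, (C.updateRow i (P i)).det, fun t => ?_⟩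
  have hM := one_sub_diagonal_update_mul P α i t
  refine ⟨by rw [hM, hdet], ?_⟩
  rw [sum_inv_mulVec, hM, hdet, Finset.sum_mul, ← Finset.sum_add_distrib]
  congr 1
  refine Finset.sum_congr rfl fun k _ => ?_
  rw [← hpq k t, mulVec_diagonal]

end

theorem rwMatrix_nonneg {n : ℕ} (G : SimpleGraph (Fin n)) [DecidableRel G.Adj] (i j : Fin n) :
    0 ≤ rwMatrix G i j := by
  unfold rwMatrix
  split_ifs <;> positivity

theorem sum_rwMatrix_le_one {n : ℕ} (G : SimpleGraph (Fin n)) [DecidableRel G.Adj] (i : Fin n) :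
    ∑ j, rwMatrix G i j ≤ 1 := by
  unfold rwMatrix
  rw [Finset.sum_ite, Finset.sum_const_zero, add_zero, Finset.sum_const,
    ← SimpleGraph.neighborFinset_eq_filter, SimpleGraph.card_neighborFinset_eq_degree,
    nsmul_eq_mul, mul_one_div]
  exact div_self_le_one _

theorem opinion_minimization_extreme_values_general
    {n : ℕ} (G : SimpleGraph (Fin n)) [DecidableRel G.Adj]
    (s : Fin n → ℝ)
    (ℓ u : ℝ) (hℓ : 0 < ℓ) (hℓu : ℓ ≤ u) (hu : u ≤ 1) :
    ∃ αstar : Fin n → ℝ, (∀ i, αstar i = ℓ ∨ αstar i = u) ∧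
      ∀ α : Fin n → ℝ, (∀ i, α i ∈ Set.Icc ℓ u) →
        totalOpinion G s αstar ≤ totalOpinion G s α := by
  refine exists_vertex_minimizer (totalOpinion G s) hℓu fun α hα i => ?_
  obtain ⟨a, b, c, d, hf⟩ := exists_linearFractional_update (rwMatrix G) s α i
  have hD : ∀ t ∈ Icc ℓ u, c + d * t ≠ 0 := fun t ht => by
    rw [← (hf t).1]
    have hbox := (forall_update_iff α (a := i) fun _ y => y ∈ Icc ℓ u).2 ⟨ht, fun j _ => hα j⟩
    exact det_one_sub_diagonal_mul_ne_zero (rwMatrix_nonneg G) (sum_rwMatrix_le_one G)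
      fun j => ⟨hℓ.trans_le (hbox j).1, (hbox j).2.trans hu⟩
  obtain ⟨e, he, hle⟩ := exists_endpoint_div_le (a := a) (b := b) hD (hα i)
  refine ⟨e, he, ?_⟩
  have hα_eq := (hf (α i)).2
  rw [update_eq_self] at hα_eq
  rwa [totalOpinion, totalOpinion, (hf e).2, hα_eq]

theorem opinion_minimization_extreme_values
    {n : ℕ} (G : SimpleGraph (Fin n)) [DecidableRel G.Adj]
    (hdeg : ∀ v, 0 < G.degree v)
    (s : Fin n → ℝ) (hs : ∀ i, s i ∈ Set.Icc (0 : ℝ) 1)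
    (ℓ u : ℝ) (hℓ : 0 < ℓ) (hℓu : ℓ ≤ u) (hu : u ≤ 1) :
    ∃ αstar : Fin n → ℝ, (∀ i, αstar i = ℓ ∨ αstar i = u) ∧
      ∀ α : Fin n → ℝ, (∀ i, α i ∈ Set.Icc ℓ u) →
        totalOpinion G s αstar ≤ totalOpinion G s α :=
  opinion_minimization_extreme_values_general G s ℓ u hℓ hℓu hu
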